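/- Let Γ be a row-finite digraph and Γ' a one-step reduction of Γ eliminating the loopless non-sink v. Then the category of quiver representations of Γ satisfying condition (I) is equivalent to the category of quiver representations of Γ' satisfying condition (I): restriction to V∖{v} is an equivalence of categories. -/

import Mathlib

/-- Condition (I) for a quiver representation of the digraph `(V, E, s, t)`. -/
def SatisfiesI (F : Type) [Field F] {V E : Type} (s t : E → V)
    (M : V → Type) [∀ v, AddCommGroup (M v)] [∀ v, Module F (M v)]
    (ρ : ∀ e : E, M (s e) →ₗ[F] M (t e)) : Prop :=
  ∀ v : V, (∃ e, s e = v) →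
    Function.Bijective
      (fun (x : M v) (e : {e : E // s e = v}) => ρ e.1 (cast (congrArg M e.2.symm) x))

/-- Morphisms of quiver representations: a family of linear maps commuting with the
structure maps. -/
def IsRepHom (F : Type) [Field F] {V E : Type} (s t : E → V)
    (M : V → Type) [∀ v, AddCommGroup (M v)] [∀ v, Module F (M v)]
    (N : V → Type) [∀ v, AddCommGroup (N v)] [∀ v, Module F (N v)]
    (ρ : ∀ e : E, M (s e) →ₗ[F] M (t e)) (σ : ∀ e : E, N (s e) →ₗ[F] N (t e))
    (f : ∀ v, M v →ₗ[F] N v) : Prop :=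
  ∀ e : E, (σ e).comp (f (s e)) = (f (t e)).comp (ρ e)

def RedV (V : Type) (v : V) : Type := {w : V // w ≠ v}

def RedE (V E : Type) (s t : E → V) (v : V) : Type :=
  {e : E // s e ≠ v ∧ t e ≠ v} ⊕ {p : E × E // t p.1 = v ∧ s p.2 = v}

def RedS (V E : Type) (s t : E → V) (v : V) (hl : ∀ e, ¬(s e = v ∧ t e = v)) :
    RedE V E s t v → RedV V v
  | .inl e => ⟨s e.1, e.2.1⟩
  | .inr p => ⟨s p.1.1, fun h => hl p.1.1 ⟨h, p.2.1⟩⟩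

def RedT (V E : Type) (s t : E → V) (v : V) (hl : ∀ e, ¬(s e = v ∧ t e = v)) :
    RedE V E s t v → RedV V v
  | .inl e => ⟨t e.1, e.2.2⟩
  | .inr p => ⟨t p.1.2, fun h => hl p.1.2 ⟨p.2.2, h⟩⟩

/-- Transport along an equality of vertices. -/
def eqToLin (F : Type) [Field F] {V : Type} (M : V → Type)
    [∀ v, AddCommGroup (M v)] [∀ v, Module F (M v)] {a b : V} (h : a = b) :
    M a →ₗ[F] M b := h ▸ LinearMap.id

/-- The restriction of a representation of `Γ` to a representation of the one-step
reduction `Γ'`: old arrows keep their maps, and a new arrow `fg` is sent to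
`ρ(g) ∘ ρ(f)`. -/
def RedRho (F : Type) [Field F] {V E : Type} (s t : E → V) (v : V)
    (hl : ∀ e, ¬(s e = v ∧ t e = v))
    (M : V → Type) [∀ w, AddCommGroup (M w)] [∀ w, Module F (M w)]
    (ρ : ∀ e : E, M (s e) →ₗ[F] M (t e)) :
    ∀ e' : RedE V E s t v,
      M ((RedS V E s t v hl e').1) →ₗ[F] M ((RedT V E s t v hl e').1)
  | .inl e => ρ e.1
  | .inr p => (ρ p.1.2).comp ((eqToLin F M (p.2.1.trans p.2.2.symm)).comp (ρ p.1.1))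

/-- A representation `N` of `Γ'` satisfying (I) extends to `Γ`: there is a representation
of `Γ` on `M` satisfying (I) whose restriction to `Γ'` is isomorphic to `N`. -/
def ExtendsTo (F : Type) [Field F] {V E : Type} (s t : E → V) (v : V)
    (hl : ∀ e, ¬(s e = v ∧ t e = v))
    (N : RedV V v → Type) [∀ w, AddCommGroup (N w)] [∀ w, Module F (N w)]
    (σ : ∀ e' : RedE V E s t v,
      N (RedS V E s t v hl e') →ₗ[F] N (RedT V E s t v hl e'))
    (M : V → Type) [∀ w, AddCommGroup (M w)] [∀ w, Module F (M w)] : Prop :=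
  ∃ ρ : ∀ e : E, M (s e) →ₗ[F] M (t e), SatisfiesI F s t M ρ ∧
    ∃ φ : ∀ w : RedV V v, M w.1 ≃ₗ[F] N w,
      IsRepHom F (RedS V E s t v hl) (RedT V E s t v hl)
        (fun w => M w.1) N (RedRho F s t v hl M ρ) σ
        (fun w => (φ w).toLinearMap)

set_option linter.unusedSectionVars false
namespace S13

lemma cast_self {α : Sort _} (h : α = α) (x : α) : cast h x = x := eq_of_heq (cast_heq h x)

variable (F : Type) [Field F] {V E : Type} (s t : E → V)
variable (M : V → Type) [∀ w, AddCommGroup (M w)] [∀ w, Module F (M w)]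

lemma eqToLin_apply {a b : V} (h : a = b) (x : M a) :
    eqToLin F M h x = cast (congrArg M h) x := by subst h; rfl

lemma fam_cast {N : V → Type} [∀ w, AddCommGroup (N w)] [∀ w, Module F (N w)]
    (f : ∀ w, M w →ₗ[F] N w) {a b : V} (h : a = b) (x : M a) :
    f b (cast (congrArg M h) x) = cast (congrArg N h) (f a x) := by subst h; rfl

theorem part1
    (v : V) (hl : ∀ e, ¬(s e = v ∧ t e = v)) (hns : ∃ e, s e = v)
    (ρ : ∀ e : E, M (s e) →ₗ[F] M (t e)) (hI : SatisfiesI F s t M ρ) :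
    SatisfiesI F (RedS V E s t v hl) (RedT V E s t v hl)
      (fun w => M w.1) (RedRho F s t v hl M ρ) := by
  classical
  intro w hw
  obtain ⟨w0, hw0⟩ := w
  have hwns : ∃ e, s e = w0 := by
    obtain ⟨e', he'⟩ := hw
    cases e' with
    | inl e => exact ⟨e.1, congrArg Subtype.val he'⟩
    | inr p => exact ⟨p.1.1, congrArg Subtype.val he'⟩
  constructor
  · intro x y hxy
    apply (hI w0 hwns).1
    funext e
    obtain ⟨e, he⟩ := e
    by_cases htv : t e = v
    · subst htv
      apply (hI (t e) hns).1
      funext g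
      obtain ⟨g, hg⟩ := g
      have H : ρ g (eqToLin F M ((rfl : t e = t e).trans hg.symm)
            (ρ e (cast (congrArg M he.symm) x)))
          = ρ g (eqToLin F M ((rfl : t e = t e).trans hg.symm)
            (ρ e (cast (congrArg M he.symm) y))) :=
        congrFun hxy ⟨.inr ⟨(e, g), rfl, hg⟩, Subtype.ext he⟩
      simp only [eqToLin_apply] at H
      exact H
    · have hse : s e ≠ v := fun h => hw0 (he.symm.trans h)
      exact congrFun hxy ⟨.inl ⟨e, hse, htv⟩, Subtype.ext he⟩
  · intro ψ
    set χ : ∀ e : {e : E // s e = w0}, M (t e.1) := fun e =>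
      if htv : t e.1 = v then
        cast (congrArg M htv.symm)
          (Classical.choose ((hI v hns).2
            (fun g : {g : E // s g = v} =>
              ψ ⟨.inr ⟨(e.1, g.1), htv, g.2⟩, Subtype.ext e.2⟩)))
      else
        ψ ⟨.inl ⟨e.1, fun h => hw0 (e.2.symm.trans h), htv⟩, Subtype.ext e.2⟩
      with hχdef
    obtain ⟨x, hx⟩ := (hI w0 hwns).2 χ
    refine ⟨x, ?_⟩
    funext e'
    obtain ⟨e', he'⟩ := e'
    cases e' with
    | inl e =>
      obtain ⟨e, hse, hte⟩ := e
      have he : s e = w0 := congrArg Subtype.val he'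
      have h1 := congrFun hx ⟨e, he⟩
      simp only [hχdef] at h1
      replace h1 := h1.trans (dif_neg hte)
      exact h1
    | inr p =>
      obtain ⟨⟨e, g⟩, hte, hsg⟩ := p
      have he : s e = w0 := congrArg Subtype.val he'
      have h1 := congrFun hx ⟨e, he⟩
      simp only [hχdef] at h1
      replace h1 := h1.trans (dif_pos hte)
      have hu := Classical.choose_spec ((hI v hns).2
        (fun g' : {g' : E // s g' = v} =>
          ψ ⟨.inr ⟨(e, g'.1), hte, g'.2⟩, Subtype.ext he⟩))
      show ρ g (eqToLin F M (hte.trans hsg.symm)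
          (ρ e (cast (congrArg M he.symm) x))) = _
      rw [eqToLin_apply, h1, cast_cast]
      exact congrFun hu ⟨g, hsg⟩

theorem part2 (v : V) (hl : ∀ e, ¬(s e = v ∧ t e = v))
    (N : V → Type) [∀ w, AddCommGroup (N w)] [∀ w, Module F (N w)]
    (ρ : ∀ e : E, M (s e) →ₗ[F] M (t e)) (σ : ∀ e : E, N (s e) →ₗ[F] N (t e))
    (f : ∀ w, M w →ₗ[F] N w) (hf : IsRepHom F s t M N ρ σ f) :
    IsRepHom F (RedS V E s t v hl) (RedT V E s t v hl) (fun w => M w.1) (fun w => N w.1)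
      (RedRho F s t v hl M ρ) (RedRho F s t v hl N σ) (fun w => f w.1) := by
  intro e'
  cases e' with
  | inl e => exact hf e.1
  | inr p =>
    obtain ⟨⟨a, b⟩, hta, hsb⟩ := p
    apply LinearMap.ext; intro x
    have h1 : σ a (f (s a) x) = f (t a) (ρ a x) := LinearMap.congr_fun (hf a) x
    have h2 : σ b (f (s b) (eqToLin F M (hta.trans hsb.symm) (ρ a x)))
        = f (t b) (ρ b (eqToLin F M (hta.trans hsb.symm) (ρ a x))) :=
      LinearMap.congr_fun (hf b) _
    have key : f (s b) (eqToLin F M (hta.trans hsb.symm) (ρ a x))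
        = eqToLin F N (hta.trans hsb.symm) (f (t a) (ρ a x)) := by
      rw [eqToLin_apply, eqToLin_apply]
      exact fam_cast F M f (hta.trans hsb.symm) (ρ a x)
    show σ b (eqToLin F N (hta.trans hsb.symm) (σ a (f (s a) x)))
      = f (t b) (ρ b (eqToLin F M (hta.trans hsb.symm) (ρ a x)))
    rw [h1, ← key, h2]

lemma eqToLin_eqToLin {a b c : V} (h1 : a = b) (h2 : b = c) (x : M a) :
    eqToLin F M h2 (eqToLin F M h1 x) = eqToLin F M (h1.trans h2) x := by
  subst h1; subst h2; rfl

lemma eqToLin_self {a : V} (h : a = a) (x : M a) : eqToLin F M h x = x := by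
  rw [eqToLin_apply]; exact cast_self _ _

lemma eqToLin_natural {N : V → Type} [∀ w, AddCommGroup (N w)] [∀ w, Module F (N w)]
    (f : ∀ w, M w →ₗ[F] N w) {a b : V} (h : a = b) (x : M a) :
    f b (eqToLin F M h x) = eqToLin F N h (f a x) := by subst h; rfl

def bigLin (ρ : ∀ e : E, M (s e) →ₗ[F] M (t e)) (w : V) :
    M w →ₗ[F] ∀ e : {e : E // s e = w}, M (t e.1) :=
  LinearMap.pi fun e => (ρ e.1).comp (eqToLin F M e.2.symm)

lemma bigLin_coe (ρ : ∀ e : E, M (s e) →ₗ[F] M (t e)) (w : V) :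
    ⇑(bigLin F s t M ρ w)
      = fun x (e : {e : E // s e = w}) => ρ e.1 (cast (congrArg M e.2.symm) x) := by
  funext x e
  simp [bigLin, eqToLin_apply]

theorem part3 (v : V) (hl : ∀ e, ¬(s e = v ∧ t e = v)) (hns : ∃ e, s e = v)
    (N : V → Type) [∀ w, AddCommGroup (N w)] [∀ w, Module F (N w)]
    (ρ : ∀ e : E, M (s e) →ₗ[F] M (t e)) (σ : ∀ e : E, N (s e) →ₗ[F] N (t e))
    (g : ∀ w : RedV V v, M w.1 →ₗ[F] N w.1)
    (hIN : SatisfiesI F s t N σ)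
    (hg : IsRepHom F (RedS V E s t v hl) (RedT V E s t v hl) (fun w => M w.1)
      (fun w => N w.1) (RedRho F s t v hl M ρ) (RedRho F s t v hl N σ) g) :
    ∃! f : ∀ w : V, M w →ₗ[F] N w,
      IsRepHom F s t M N ρ σ f ∧ ∀ w : RedV V v, f w.1 = g w := by
  classical
  have htne : ∀ e : {e : E // s e = v}, t e.1 ≠ v := fun e h => hl e.1 ⟨e.2, h⟩
  have Bσ : Function.Bijective ⇑(bigLin F s t N σ v) := by
    rw [bigLin_coe]; exact hIN v hns
  let eN : N v ≃ₗ[F] ∀ e : {e : E // s e = v}, N (t e.1) :=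
    LinearEquiv.ofBijective _ Bσ
  let pg : M v →ₗ[F] ∀ e : {e : E // s e = v}, N (t e.1) :=
    LinearMap.pi fun e : {e : E // s e = v} =>
      (g ⟨t e.1, htne e⟩).comp ((ρ e.1).comp (eqToLin F M e.2.symm))
  let fv : M v →ₗ[F] N v := eN.symm.toLinearMap.comp pg
  have hbig : ∀ z : N v, bigLin F s t N σ v z
      = fun e : {e : E // s e = v} => σ e.1 (eqToLin F N e.2.symm z) := fun z => rfl
  have heN : ∀ z, bigLin F s t N σ v (eN.symm z) = z := fun z => eN.apply_symm_apply z
  have key : ∀ (e : {e : E // s e = v}) (x : M v),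
      σ e.1 (eqToLin F N e.2.symm (fv x))
        = g ⟨t e.1, htne e⟩ (ρ e.1 (eqToLin F M e.2.symm x)) := by
    intro e x
    have h1 : bigLin F s t N σ v (fv x) = pg x := heN (pg x)
    exact congrFun h1 e
  set f : ∀ w : V, M w →ₗ[F] N w := fun w =>
    if h : w = v then (eqToLin F N h.symm).comp (fv.comp (eqToLin F M h)) else g ⟨w, h⟩
    with hfdef
  have hres : ∀ w : RedV V v, f w.1 = g w := by
    rintro ⟨w0, hw0⟩
    simp only [hfdef, dif_neg hw0]
  have hhom : IsRepHom F s t M N ρ σ f := by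
    intro e
    by_cases hsv : s e = v
    · have htv : t e ≠ v := fun h => hl e ⟨hsv, h⟩
      have hfs : f (s e) = (eqToLin F N hsv.symm).comp (fv.comp (eqToLin F M hsv)) := by
        simp only [hfdef, dif_pos hsv]
      have hft : f (t e) = g ⟨t e, htv⟩ := by simp only [hfdef, dif_neg htv]
      apply LinearMap.ext; intro x
      show σ e (f (s e) x) = f (t e) (ρ e x)
      rw [hfs, hft]
      show σ e (eqToLin F N hsv.symm (fv (eqToLin F M hsv x))) = g ⟨t e, htv⟩ (ρ e x)
      rw [key ⟨e, hsv⟩ (eqToLin F M hsv x), eqToLin_eqToLin, eqToLin_self]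
    · by_cases htv : t e = v
      · have hfs : f (s e) = g ⟨s e, hsv⟩ := by simp only [hfdef, dif_neg hsv]
        have hft : f (t e) = (eqToLin F N htv.symm).comp (fv.comp (eqToLin F M htv)) := by
          simp only [hfdef, dif_pos htv]
        apply LinearMap.ext; intro x
        show σ e (f (s e) x) = f (t e) (ρ e x)
        rw [hfs, hft]
        show σ e (g ⟨s e, hsv⟩ x) = eqToLin F N htv.symm (fv (eqToLin F M htv (ρ e x)))
        have main : fv (eqToLin F M htv (ρ e x))
            = eqToLin F N htv (σ e (g ⟨s e, hsv⟩ x)) := by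
          apply Bσ.1
          funext e'
          show σ e'.1 (eqToLin F N e'.2.symm (fv (eqToLin F M htv (ρ e x))))
            = σ e'.1 (eqToLin F N e'.2.symm (eqToLin F N htv (σ e (g ⟨s e, hsv⟩ x))))
          rw [key e', eqToLin_eqToLin, eqToLin_eqToLin]
          exact (LinearMap.congr_fun (hg (.inr ⟨(e, e'.1), htv, e'.2⟩)) x).symm
        rw [main, eqToLin_eqToLin, eqToLin_self]
      · have hfs : f (s e) = g ⟨s e, hsv⟩ := by simp only [hfdef, dif_neg hsv]
        have hft : f (t e) = g ⟨t e, htv⟩ := by simp only [hfdef, dif_neg htv]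
        rw [hfs, hft]
        exact hg (.inl ⟨e, hsv, htv⟩)
  have hside : ∀ (f'' : ∀ w : V, M w →ₗ[F] N w), IsRepHom F s t M N ρ σ f'' →
      (∀ w : RedV V v, f'' w.1 = g w) →
      ∀ (x : M v) (e : {e : E // s e = v}),
        σ e.1 (eqToLin F N e.2.symm (f'' v x))
          = g ⟨t e.1, htne e⟩ (ρ e.1 (eqToLin F M e.2.symm x)) := by
    intro f'' h1 h2 x e
    rw [← eqToLin_natural F M f'' e.2.symm x]
    have h3 : σ e.1 (f'' (s e.1) (eqToLin F M e.2.symm x))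
        = f'' (t e.1) (ρ e.1 (eqToLin F M e.2.symm x)) :=
      LinearMap.congr_fun (h1 e.1) _
    rw [h3, h2 ⟨t e.1, htne e⟩]
  refine ⟨f, ⟨hhom, hres⟩, ?_⟩
  rintro f' ⟨hf'hom, hf'res⟩
  funext w
  by_cases h : w = v
  · subst h
    apply LinearMap.ext; intro x
    apply Bσ.1
    funext e
    show σ e.1 (eqToLin F N e.2.symm (f' w x)) = σ e.1 (eqToLin F N e.2.symm (f w x))
    rw [hside f' hf'hom hf'res x e, hside f hhom hres x e]
  · rw [hf'res ⟨w, h⟩, hres ⟨w, h⟩]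

/-! ### Part 4: essential surjectivity -/

def ExtM {V E : Type} (s t : E → V) (v : V) (hl : ∀ e, ¬(s e = v ∧ t e = v))
    (N : RedV V v → Type) (w : V) : Type :=
  (∀ h : PLift (w ≠ v), N ⟨w, h.down⟩) ×
  (∀ _ : PLift (w = v), ∀ g : {g : E // s g = v}, N ⟨t g.1, fun hh => hl g.1 ⟨g.2, hh⟩⟩)

instance instRedAdd {V : Type} {v : V} (N : RedV V v → Type) [i : ∀ w, AddCommGroup (N w)]
    (w : V) (h : w ≠ v) : AddCommGroup (N ⟨w, h⟩) := i _

instance instRedMod (F : Type) [Field F] {V : Type} {v : V} (N : RedV V v → Type)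
    [∀ w, AddCommGroup (N w)] [i : ∀ w, Module F (N w)]
    (w : V) (h : w ≠ v) : Module F (N ⟨w, h⟩) := i _

section Part4

variable (v : V) (hl : ∀ e, ¬(s e = v ∧ t e = v))
variable (N : RedV V v → Type) [∀ w, AddCommGroup (N w)] [∀ w, Module F (N w)]

instance instExtMAdd (w : V) : AddCommGroup (ExtM s t v hl N w) :=
  inferInstanceAs (AddCommGroup ((∀ h : PLift (w ≠ v), N ⟨w, h.down⟩) ×
    (∀ _ : PLift (w = v), ∀ g : {g : E // s g = v}, N ⟨t g.1, fun hh => hl g.1 ⟨g.2, hh⟩⟩)))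

instance instExtMMod (w : V) : Module F (ExtM s t v hl N w) :=
  inferInstanceAs (Module F ((∀ h : PLift (w ≠ v), N ⟨w, h.down⟩) ×
    (∀ _ : PLift (w = v), ∀ g : {g : E // s g = v}, N ⟨t g.1, fun hh => hl g.1 ⟨g.2, hh⟩⟩)))

def toN (w : V) (h : w ≠ v) : ExtM s t v hl N w →ₗ[F] N ⟨w, h⟩ :=
  (LinearMap.proj (PLift.up h)).comp (LinearMap.fst F _ _)

def fromN (w : V) (h : w ≠ v) : N ⟨w, h⟩ →ₗ[F] ExtM s t v hl N w :=
  LinearMap.prod (LinearMap.pi fun _ : PLift (w ≠ v) => LinearMap.id)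
    (LinearMap.pi fun h'' : PLift (w = v) => absurd h''.down h)

def toPi (w : V) (h : w = v) :
    ExtM s t v hl N w →ₗ[F] ∀ g : {g : E // s g = v}, N ⟨t g.1, fun hh => hl g.1 ⟨g.2, hh⟩⟩ :=
  (LinearMap.proj (PLift.up h)).comp (LinearMap.snd F _ _)

def fromPi (w : V) (h : w = v) :
    (∀ g : {g : E // s g = v}, N ⟨t g.1, fun hh => hl g.1 ⟨g.2, hh⟩⟩)
      →ₗ[F] ExtM s t v hl N w :=
  LinearMap.prod (LinearMap.pi fun h' : PLift (w ≠ v) => absurd h h'.down)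
    (LinearMap.pi fun _ : PLift (w = v) => LinearMap.id)

lemma ext_of_ne {w : V} (h : w ≠ v) {x y : ExtM s t v hl N w}
    (hxy : x.1 (PLift.up h) = y.1 (PLift.up h)) : x = y := by
  refine Prod.ext ?_ ?_
  · funext h'; exact hxy
  · funext h''; exact absurd h''.down h

lemma ext_of_eq {w : V} (h : w = v) {x y : ExtM s t v hl N w}
    (hxy : x.2 (PLift.up h) = y.2 (PLift.up h)) : x = y := by
  refine Prod.ext ?_ ?_
  · funext h'; exact absurd h h'.down
  · funext h''; exact hxy

lemma toN_cast {a b : V} (hab : a = b) (ha : a ≠ v) (hb : b ≠ v) (x : ExtM s t v hl N a) :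
    toN F s t v hl N b hb (cast (congrArg (ExtM s t v hl N) hab) x)
      = cast (congrArg N (Subtype.ext hab :
          (⟨a, ha⟩ : RedV V v) = ⟨b, hb⟩)) (toN F s t v hl N a ha x) := by
  subst hab
  rw [cast_self, cast_self]

lemma toPi_cast {a b : V} (hab : a = b) (hb : b = v) (x : ExtM s t v hl N a) :
    toPi F s t v hl N b hb (cast (congrArg (ExtM s t v hl N) hab) x)
      = toPi F s t v hl N a (hab.trans hb) x := by
  subst hab
  rw [cast_self]

variable (σ : ∀ e' : RedE V E s t v,
  N (RedS V E s t v hl e') →ₗ[F] N (RedT V E s t v hl e'))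

open Classical in
noncomputable def ExtRho (e : E) :
    ExtM s t v hl N (s e) →ₗ[F] ExtM s t v hl N (t e) :=
  if hsv : s e = v then
    (fromN F s t v hl N (t e) (fun hh => hl e ⟨hsv, hh⟩)).comp
      ((LinearMap.proj (⟨e, hsv⟩ : {g : E // s g = v})).comp
        (toPi F s t v hl N (s e) hsv))
  else if htv : t e = v then
    (fromPi F s t v hl N (t e) htv).comp
      ((LinearMap.pi fun g : {g : E // s g = v} =>
        σ (.inr ⟨(e, g.1), htv, g.2⟩)).comp (toN F s t v hl N (s e) hsv))
  else
    (fromN F s t v hl N (t e) htv).comp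
      ((σ (.inl ⟨e, hsv, htv⟩)).comp (toN F s t v hl N (s e) hsv))

lemma ExtRho_eq1 (e : E) (hsv : s e = v) :
    ExtRho F s t v hl N σ e
      = (fromN F s t v hl N (t e) (fun hh => hl e ⟨hsv, hh⟩)).comp
          ((LinearMap.proj (⟨e, hsv⟩ : {g : E // s g = v})).comp
            (toPi F s t v hl N (s e) hsv)) := by
  simp only [ExtRho]; rw [dif_pos hsv]

lemma ExtRho_eq2 (e : E) (hsv : s e ≠ v) (htv : t e = v) :
    ExtRho F s t v hl N σ e
      = (fromPi F s t v hl N (t e) htv).comp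
          ((LinearMap.pi fun g : {g : E // s g = v} =>
            σ (.inr ⟨(e, g.1), htv, g.2⟩)).comp (toN F s t v hl N (s e) hsv)) := by
  simp only [ExtRho]; rw [dif_neg hsv, dif_pos htv]

lemma ExtRho_eq3 (e : E) (hsv : s e ≠ v) (htv : t e ≠ v) :
    ExtRho F s t v hl N σ e
      = (fromN F s t v hl N (t e) htv).comp
          ((σ (.inl ⟨e, hsv, htv⟩)).comp (toN F s t v hl N (s e) hsv)) := by
  simp only [ExtRho]; rw [dif_neg hsv, dif_neg htv]

end Part4

section Part4b

variable (v : V) (hl : ∀ e, ¬(s e = v ∧ t e = v))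
variable (N : RedV V v → Type) [∀ w, AddCommGroup (N w)] [∀ w, Module F (N w)]
variable (σ : ∀ e' : RedE V E s t v,
  N (RedS V E s t v hl e') →ₗ[F] N (RedT V E s t v hl e'))

lemma rho_from_v (x : ExtM s t v hl N v) (e : E) (he : s e = v) :
    ExtRho F s t v hl N σ e (cast (congrArg (ExtM s t v hl N) he.symm) x)
      = fromN F s t v hl N (t e) (fun hh => hl e ⟨he, hh⟩)
          (x.2 (PLift.up rfl) ⟨e, he⟩) := by
  rw [ExtRho_eq1 F s t v hl N σ e he]
  show fromN F s t v hl N (t e) (fun hh => hl e ⟨he, hh⟩)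
      ((toPi F s t v hl N (s e) he
        (cast (congrArg (ExtM s t v hl N) he.symm) x)) ⟨e, he⟩) = _
  rw [toPi_cast F s t v hl N he.symm he x]
  rfl

lemma rho_ne_eq {w : V} (x : ExtM s t v hl N w) (e : E) (he : s e = w) (hw : w ≠ v)
    (htv : t e = v) :
    ExtRho F s t v hl N σ e (cast (congrArg (ExtM s t v hl N) he.symm) x)
      = fromPi F s t v hl N (t e) htv (fun g : {g : E // s g = v} =>
          σ (.inr ⟨(e, g.1), htv, g.2⟩)
            (cast (congrArg N (Subtype.ext he.symm :
              (⟨w, hw⟩ : RedV V v) = ⟨s e, fun h => hw (he.symm.trans h)⟩))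
              (x.1 (PLift.up hw)))) := by
  have hsv : s e ≠ v := fun h => hw (he.symm.trans h)
  rw [ExtRho_eq2 F s t v hl N σ e hsv htv]
  show fromPi F s t v hl N (t e) htv (fun g : {g : E // s g = v} =>
      σ (.inr ⟨(e, g.1), htv, g.2⟩)
        (toN F s t v hl N (s e) hsv (cast (congrArg (ExtM s t v hl N) he.symm) x))) = _
  rw [toN_cast F s t v hl N he.symm hw hsv x]
  rfl

lemma rho_ne_ne {w : V} (x : ExtM s t v hl N w) (e : E) (he : s e = w) (hw : w ≠ v)
    (hsv : s e ≠ v) (htv : t e ≠ v) :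
    ExtRho F s t v hl N σ e (cast (congrArg (ExtM s t v hl N) he.symm) x)
      = fromN F s t v hl N (t e) htv
          (σ (.inl ⟨e, hsv, htv⟩)
            (cast (congrArg N (Subtype.ext he.symm :
              (⟨w, hw⟩ : RedV V v) = ⟨s e, hsv⟩)) (x.1 (PLift.up hw)))) := by
  rw [ExtRho_eq3 F s t v hl N σ e hsv htv]
  show fromN F s t v hl N (t e) htv
      (σ (.inl ⟨e, hsv, htv⟩)
        (toN F s t v hl N (s e) hsv (cast (congrArg (ExtM s t v hl N) he.symm) x))) = _
  rw [toN_cast F s t v hl N he.symm hw hsv x]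
  rfl

theorem extI (hns : ∃ e, s e = v)
    (hIN : SatisfiesI F (RedS V E s t v hl) (RedT V E s t v hl) N σ) :
    SatisfiesI F s t (ExtM s t v hl N) (ExtRho F s t v hl N σ) := by
  intro w hw
  by_cases hwv : w = v
  · subst hwv
    constructor
    · intro x y hxy
      apply ext_of_eq s t w hl N rfl
      funext g
      obtain ⟨g, hg⟩ := g
      have H : ExtRho F s t w hl N σ g (cast (congrArg (ExtM s t w hl N) hg.symm) x)
          = ExtRho F s t w hl N σ g (cast (congrArg (ExtM s t w hl N) hg.symm) y) :=
        congrFun hxy ⟨g, hg⟩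
      rw [rho_from_v F s t w hl N σ x g hg, rho_from_v F s t w hl N σ y g hg] at H
      exact congrArg (fun z => toN F s t w hl N (t g) (fun hh => hl g ⟨hg, hh⟩) z) H
    · intro ψ
      refine ⟨fromPi F s t w hl N w rfl
        (fun g => toN F s t w hl N (t g.1) (fun hh => hl g.1 ⟨g.2, hh⟩) (ψ g)), ?_⟩
      funext e
      obtain ⟨e, he⟩ := e
      show ExtRho F s t w hl N σ e (cast (congrArg (ExtM s t w hl N) he.symm)
        (fromPi F s t w hl N w rfl
          (fun g => toN F s t w hl N (t g.1) (fun hh => hl g.1 ⟨g.2, hh⟩) (ψ g)))) = ψ ⟨e, he⟩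
      rw [rho_from_v F s t w hl N σ _ e he]
      exact ext_of_ne s t w hl N (fun hh => hl e ⟨he, hh⟩) rfl
  · have hw' : ∃ e', RedS V E s t v hl e' = ⟨w, hwv⟩ := by
      obtain ⟨e0, he0⟩ := hw
      by_cases ht0 : t e0 = v
      · obtain ⟨g0, hg0⟩ := hns
        exact ⟨.inr ⟨(e0, g0), ht0, hg0⟩, Subtype.ext he0⟩
      · exact ⟨.inl ⟨e0, fun h => hwv (he0.symm.trans h), ht0⟩, Subtype.ext he0⟩
    have BN := hIN ⟨w, hwv⟩ hw'
    constructor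
    · intro x y hxy
      apply ext_of_ne s t v hl N hwv
      apply BN.1
      funext e'
      obtain ⟨e', he'⟩ := e'
      cases e' with
      | inl e =>
        obtain ⟨e, hsv, htv⟩ := e
        have he : s e = w := congrArg Subtype.val he'
        have H : ExtRho F s t v hl N σ e (cast (congrArg (ExtM s t v hl N) he.symm) x)
            = ExtRho F s t v hl N σ e (cast (congrArg (ExtM s t v hl N) he.symm) y) :=
          congrFun hxy ⟨e, he⟩
        rw [rho_ne_ne F s t v hl N σ x e he hwv hsv htv,
            rho_ne_ne F s t v hl N σ y e he hwv hsv htv] at H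
        exact congrArg (fun z => toN F s t v hl N (t e) htv z) H
      | inr p =>
        obtain ⟨⟨e, g⟩, hte, hsg⟩ := p
        have he : s e = w := congrArg Subtype.val he'
        have H : ExtRho F s t v hl N σ e (cast (congrArg (ExtM s t v hl N) he.symm) x)
            = ExtRho F s t v hl N σ e (cast (congrArg (ExtM s t v hl N) he.symm) y) :=
          congrFun hxy ⟨e, he⟩
        rw [rho_ne_eq F s t v hl N σ x e he hwv hte,
            rho_ne_eq F s t v hl N σ y e he hwv hte] at H
        exact congrFun (congrArg (fun z => toPi F s t v hl N (t e) hte z) H) ⟨g, hsg⟩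
    · intro ψ
      obtain ⟨y0, hy0⟩ := BN.2 (fun e'p : {e' : RedE V E s t v //
          RedS V E s t v hl e' = ⟨w, hwv⟩} =>
        (match e'p with
          | ⟨.inl e, he'⟩ => toN F s t v hl N (t e.1) e.2.2
              (ψ ⟨e.1, congrArg Subtype.val he'⟩)
          | ⟨.inr p, he'⟩ => toPi F s t v hl N (t p.1.1) p.2.1
              (ψ ⟨p.1.1, congrArg Subtype.val he'⟩) ⟨p.1.2, p.2.2⟩ :
          N (RedT V E s t v hl e'p.1)))
      refine ⟨fromN F s t v hl N w hwv y0, ?_⟩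
      funext e
      obtain ⟨e, he⟩ := e
      have hsv : s e ≠ v := fun h => hwv (he.symm.trans h)
      show ExtRho F s t v hl N σ e (cast (congrArg (ExtM s t v hl N) he.symm)
        (fromN F s t v hl N w hwv y0)) = ψ ⟨e, he⟩
      by_cases htv : t e = v
      · rw [rho_ne_eq F s t v hl N σ _ e he hwv htv]
        apply ext_of_eq s t v hl N htv
        funext g
        obtain ⟨g, hg⟩ := g
        have H : σ (.inr ⟨(e, g), htv, hg⟩)
            (cast (congrArg N (Subtype.ext he.symm :
              (⟨w, hwv⟩ : RedV V v) = ⟨s e, hsv⟩)) y0)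
            = toPi F s t v hl N (t e) htv (ψ ⟨e, he⟩) ⟨g, hg⟩ :=
          congrFun hy0 ⟨.inr ⟨(e, g), htv, hg⟩, Subtype.ext he⟩
        exact H
      · rw [rho_ne_ne F s t v hl N σ _ e he hwv hsv htv]
        apply ext_of_ne s t v hl N htv
        have H : σ (.inl ⟨e, hsv, htv⟩)
            (cast (congrArg N (Subtype.ext he.symm :
              (⟨w, hwv⟩ : RedV V v) = ⟨s e, hsv⟩)) y0)
            = toN F s t v hl N (t e) htv (ψ ⟨e, he⟩) :=
          congrFun hy0 ⟨.inl ⟨e, hsv, htv⟩, Subtype.ext he⟩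
        exact H

end Part4b

section Part4c

variable (v : V) (hl : ∀ e, ¬(s e = v ∧ t e = v))
variable (N : RedV V v → Type) [∀ w, AddCommGroup (N w)] [∀ w, Module F (N w)]
variable (σ : ∀ e' : RedE V E s t v,
  N (RedS V E s t v hl e') →ₗ[F] N (RedT V E s t v hl e'))

lemma toPi_fromPi_cast {a b : E} (hta : t a = v) (hsb : s b = v)
    (fn : ∀ g : {g : E // s g = v}, N ⟨t g.1, fun hh => hl g.1 ⟨g.2, hh⟩⟩) :
    toPi F s t v hl N (s b) hsb
      (cast (congrArg (ExtM s t v hl N) (hta.trans hsb.symm))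
        (fromPi F s t v hl N (t a) hta fn)) = fn := by
  rw [toPi_cast F s t v hl N (hta.trans hsb.symm) hsb]
  rfl

theorem part4hom :
    IsRepHom F (RedS V E s t v hl) (RedT V E s t v hl)
      (fun w => ExtM s t v hl N w.1) N
      (RedRho F s t v hl (ExtM s t v hl N) (ExtRho F s t v hl N σ)) σ
      (fun w => toN F s t v hl N w.1 w.2) := by
  intro e'
  cases e' with
  | inl e =>
    apply LinearMap.ext; intro x
    show σ (.inl e) (toN F s t v hl N (s e.1) e.2.1 x)
      = toN F s t v hl N (t e.1) e.2.2 (ExtRho F s t v hl N σ e.1 x)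
    rw [ExtRho_eq3 F s t v hl N σ e.1 e.2.1 e.2.2]
    rfl
  | inr p =>
    obtain ⟨⟨a, b⟩, hta, hsb⟩ := p
    have hsa : s a ≠ v := fun h => hl a ⟨h, hta⟩
    have htb : t b ≠ v := fun h => hl b ⟨hsb, h⟩
    apply LinearMap.ext; intro x
    show σ (.inr ⟨(a, b), hta, hsb⟩) (toN F s t v hl N (s a) hsa x)
      = toN F s t v hl N (t b) htb (ExtRho F s t v hl N σ b
          (eqToLin F (ExtM s t v hl N) (hta.trans hsb.symm) (ExtRho F s t v hl N σ a x)))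
    rw [ExtRho_eq2 F s t v hl N σ a hsa hta, ExtRho_eq1 F s t v hl N σ b hsb,
      eqToLin_apply]
    show σ (.inr ⟨(a, b), hta, hsb⟩) (toN F s t v hl N (s a) hsa x)
      = (toPi F s t v hl N (s b) hsb (cast (congrArg (ExtM s t v hl N) (hta.trans hsb.symm))
          (fromPi F s t v hl N (t a) hta
            (fun g : {g : E // s g = v} =>
              σ (.inr ⟨(a, g.1), hta, g.2⟩) (toN F s t v hl N (s a) hsa x))))) ⟨b, hsb⟩
    exact (congrFun (toPi_fromPi_cast F s t v hl N (a := a) (b := b) hta hsb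
      (fun g : {g : E // s g = v} =>
        σ (.inr ⟨(a, g.1), hta, g.2⟩) (toN F s t v hl N (s a) hsa x))) ⟨b, hsb⟩).symm

theorem part4 (hns : ∃ e, s e = v)
    (hIN : SatisfiesI F (RedS V E s t v hl) (RedT V E s t v hl) N σ) :
    ∃ (Mt : V → Type) (i1 : ∀ w, AddCommGroup (Mt w))
      (i2 : ∀ w, @Module F (Mt w) _ ((i1 w).toAddCommMonoid)),
      @ExtendsTo F _ V E s t v hl N _ _ σ Mt i1 i2 := by
  refine ⟨ExtM s t v hl N, fun w => instExtMAdd s t v hl N w,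
    fun w => instExtMMod F s t v hl N w,
    ExtRho F s t v hl N σ, extI F s t v hl N σ hns hIN,
    fun w => { toN F s t v hl N w.1 w.2 with
      invFun := fromN F s t v hl N w.1 w.2
      left_inv := fun x => ext_of_ne s t v hl N w.2 rfl
      right_inv := fun y => rfl },
    part4hom F s t v hl N σ⟩

end Part4c

end S13

/-- For a row-finite digraph `Γ` and its one-step reduction `Γ'` eliminating the loopless
non-sink `v`, restriction to `V ∖ {v}` is an equivalence between the category of quiver
representations of `Γ` satisfying (I) and that of `Γ'`: restriction preserves (I), it is
fully faithful on such representations, and it is essentially surjective. -/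
theorem stmt13 (F : Type) [Field F] {V E : Type} (s t : E → V)
    (hrow : ∀ w : V, {e : E | s e = w}.Finite)
    (v : V) (hl : ∀ e, ¬(s e = v ∧ t e = v)) (hns : ∃ e, s e = v) :
    -- restriction preserves condition (I)
    (∀ (M : V → Type) [∀ w, AddCommGroup (M w)] [∀ w, Module F (M w)]
        (ρ : ∀ e : E, M (s e) →ₗ[F] M (t e)), SatisfiesI F s t M ρ →
      SatisfiesI F (RedS V E s t v hl) (RedT V E s t v hl)
        (fun w => M w.1) (RedRho F s t v hl M ρ)) ∧
    -- restriction sends morphisms to morphisms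
    (∀ (M : V → Type) [∀ w, AddCommGroup (M w)] [∀ w, Module F (M w)]
        (N : V → Type) [∀ w, AddCommGroup (N w)] [∀ w, Module F (N w)]
        (ρ : ∀ e : E, M (s e) →ₗ[F] M (t e)) (σ : ∀ e : E, N (s e) →ₗ[F] N (t e))
        (f : ∀ w, M w →ₗ[F] N w), SatisfiesI F s t M ρ → SatisfiesI F s t N σ →
      IsRepHom F s t M N ρ σ f →
      IsRepHom F (RedS V E s t v hl) (RedT V E s t v hl) (fun w => M w.1) (fun w => N w.1)
        (RedRho F s t v hl M ρ) (RedRho F s t v hl N σ) (fun w => f w.1)) ∧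
    -- restriction is fully faithful: every morphism of restrictions comes from a unique
    -- morphism upstairs
    (∀ (M : V → Type) [∀ w, AddCommGroup (M w)] [∀ w, Module F (M w)]
        (N : V → Type) [∀ w, AddCommGroup (N w)] [∀ w, Module F (N w)]
        (ρ : ∀ e : E, M (s e) →ₗ[F] M (t e)) (σ : ∀ e : E, N (s e) →ₗ[F] N (t e)),
      SatisfiesI F s t M ρ → SatisfiesI F s t N σ →
      ∀ g : ∀ w : RedV V v, M w.1 →ₗ[F] N w.1,
        IsRepHom F (RedS V E s t v hl) (RedT V E s t v hl) (fun w => M w.1)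
          (fun w => N w.1) (RedRho F s t v hl M ρ) (RedRho F s t v hl N σ) g →
        ∃! f : ∀ w : V, M w →ₗ[F] N w,
          IsRepHom F s t M N ρ σ f ∧ ∀ w : RedV V v, f w.1 = g w) ∧
    -- restriction is essentially surjective
    (∀ (N : RedV V v → Type) [∀ w, AddCommGroup (N w)] [∀ w, Module F (N w)]
        (σ : ∀ e' : RedE V E s t v,
          N (RedS V E s t v hl e') →ₗ[F] N (RedT V E s t v hl e')),
      SatisfiesI F (RedS V E s t v hl) (RedT V E s t v hl) N σ →
      ∃ (M : V → Type) (i1 : ∀ w, AddCommGroup (M w))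
        (i2 : ∀ w, @Module F (M w) _ ((i1 w).toAddCommMonoid)),
        @ExtendsTo F _ V E s t v hl N _ _ σ M i1 i2) := by
  refine ⟨?_, ?_, ?_, ?_⟩
  · intro M _ _ ρ h
    exact S13.part1 F s t M v hl hns ρ h
  · intro M _ _ N _ _ ρ σ f hM hN hf
    exact S13.part2 F s t M v hl N ρ σ f hf
  · intro M _ _ N _ _ ρ σ hM hN g hg
    exact S13.part3 F s t M v hl hns N ρ σ g hN hg
  · intro N _ _ σ hσ
    exact S13.part4 F s t v hl N σ hns hσ
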